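/- Asymptotic variance of the MM scatter estimator in the SUR model (Theorem 2, scatter part). Let ρ₀, ρ₁ be ρ-functions, 0 < δ₀ < ρ₀(c₀), ψ_ℓ = ρ_ℓ'. Assume γ₀ := E[ψ₀(‖E‖_Σ)‖E‖_Σ] ≠ 0 and π₁ := (1/(m+2)) E[(m+1) ψ₁(‖E‖_Σ)‖E‖_Σ + ψ₁'(‖E‖_Σ)‖E‖_Σ²] ≠ 0. Define M(e) = (m/π₁) ψ₁(‖e‖_Σ) ‖e‖_Σ (e eᵀ/‖e‖_Σ² − Σ/m) + (2/γ₀)(ρ₀(‖e‖_Σ) − δ₀) Σ for e ∈ ℝ^m, e ≠ 0 (and M(0) := (2/γ₀)(−δ₀)Σ). Let vec denote column-stacking of m×m matrices into ℝ^{m²}, ⊗ the Kronecker product, and K_m the m²×m² commutation matrix determined by K_m vec(A) = vec(Aᵀ) for all A ∈ ℝ^{m×m}. Then E[vec(M(E)) vec(M(E))ᵀ] = σ₁ (I_{m²} + K_m)(Σ ⊗ Σ) + σ₂ vec(Σ) vec(Σ)ᵀ, where σ₁ = (m/(π₁²(m+2))) E[ψ₁(‖E‖_Σ)² ‖E‖_Σ²]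 and σ₂ = (4/γ₀²) E[(ρ₀(‖E‖_Σ) − δ₀)²] − (2/m) σ₁. -/

import Mathlib

open MeasureTheory Matrix Kronecker

noncomputable section

/-- A ρ-function with tuning constant `c`. -/
def IsRhoFunction (ρ : ℝ → ℝ) (c : ℝ) : Prop :=
  0 < c ∧ (∀ u, ρ (-u) = ρ u) ∧ ContDiff ℝ 2 ρ ∧ ρ 0 = 0 ∧
    StrictMonoOn ρ (Set.Icc 0 c) ∧ ∀ u, c ≤ u → ρ u = ρ c

/-- `‖a‖_C = √(aᵀ C⁻¹ a)`. -/
def mnorm {m : ℕ} (C : Matrix (Fin m) (Fin m) ℝ) (a : Fin m → ℝ) : ℝ :=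
  Real.sqrt (a ⬝ᵥ C⁻¹.mulVec a)

/-- Orthogonal invariance of a measure on `ℝ^m`. -/
def OrthoInvariant {m : ℕ} (μ : Measure (Fin m → ℝ)) : Prop :=
  ∀ O : Matrix (Fin m) (Fin m) ℝ, Oᵀ * O = 1 → μ.map O.mulVec = μ

/-- Column-stacking `vec` of an `m × m` matrix, with entry `A i j` at index `(i, j)`. -/
def vecm {m : ℕ} (A : Matrix (Fin m) (Fin m) ℝ) : Fin m × Fin m → ℝ :=
  fun q => A q.1 q.2

/-!
Write `E = A Z` with `Z` orthogonally invariant and `U = Z / |Z|`. Then `‖E‖_Σ = |Z|`, and entry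
`(i, j)` of `M(E)` is `s(|Z|) (⟨aᵢ,U⟩⟨aⱼ,U⟩ - ⟨aᵢ,aⱼ⟩ / m) + t(|Z|) ⟨aᵢ,aⱼ⟩` for the rows `aᵢ`
of `A`. So everything reduces to the weighted moments `T(a,b,c,d) = E[f(Z) ⟨a,U⟩⟨b,U⟩⟨c,U⟩⟨d,U⟩]`
of a radial weight `f`. A Householder reflection maps any vector to any other of the same length,
so `T(v,v,v,v) = |v|⁴ T(e,e,e,e)`; polarization turns this into
`T(a,b,c,d) = κ (⟨a,b⟩⟨c,d⟩ + ⟨a,c⟩⟨b,d⟩ + ⟨a,d⟩⟨b,c⟩)`. Contracting with `∑ U_r² = 1` gives the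
second moments `E[f ⟨a,U⟩⟨b,U⟩] = κ (m + 2) ⟨a,b⟩`, and contracting once more
`κ = E[f] / (m (m + 2))`.
-/

theorem exists_abs_le_of_forall_lt_eq {g : ℝ → ℝ} (hg : Continuous g) {c b : ℝ}
    (hb : ∀ u, c < u → g u = b) : ∃ K, ∀ u, 0 ≤ u → |g u| ≤ K := by
  obtain ⟨K, hK⟩ := (isCompact_Icc (a := 0) (b := c)).exists_bound_of_continuousOn hg.continuousOn
  refine ⟨max K |b|, fun u hu => ?_⟩
  rcases le_or_gt u c with huc | hcu
  · exact le_max_of_le_left (hK u ⟨hu, huc⟩)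
  · exact hb u hcu ▸ le_max_right _ _

namespace IsRhoFunction

variable {ρ : ℝ → ℝ} {c : ℝ}

theorem continuous (hρ : IsRhoFunction ρ c) : Continuous ρ := hρ.2.2.1.continuous

theorem continuous_deriv (hρ : IsRhoFunction ρ c) : Continuous (deriv ρ) :=
  hρ.2.2.1.continuous_deriv one_le_two

theorem deriv_eq_zero_of_lt (hρ : IsRhoFunction ρ c) {u : ℝ} (hu : c < u) : deriv ρ u = 0 := by
  have : ρ =ᶠ[nhds u] fun _ => ρ c :=
    Filter.eventually_of_mem (Ioi_mem_nhds hu) fun v hv => hρ.2.2.2.2.2 v (le_of_lt hv)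
  rw [this.deriv_eq, deriv_const]

theorem exists_abs_le (hρ : IsRhoFunction ρ c) : ∃ K, ∀ u, 0 ≤ u → |ρ u| ≤ K :=
  exists_abs_le_of_forall_lt_eq hρ.continuous fun u hu => hρ.2.2.2.2.2 u hu.le

theorem exists_abs_deriv_mul_le (hρ : IsRhoFunction ρ c) :
    ∃ K, ∀ u, 0 ≤ u → |deriv ρ u * u| ≤ K :=
  exists_abs_le_of_forall_lt_eq (hρ.continuous_deriv.mul continuous_id) fun u hu => by
    rw [hρ.deriv_eq_zero_of_lt hu, zero_mul]

end IsRhoFunction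

section Orthogonal

variable {n : Type*} [Fintype n]

theorem dotProduct_self_nonneg (v : n → ℝ) : 0 ≤ v ⬝ᵥ v :=
  Finset.sum_nonneg fun i _ => mul_self_nonneg (v i)

variable [DecidableEq n]

theorem mulVec_dotProduct_mulVec_self {O : Matrix n n ℝ} (hO : Oᵀ * O = 1) (v : n → ℝ) :
    O *ᵥ v ⬝ᵥ O *ᵥ v = v ⬝ᵥ v := by
  rw [dotProduct_mulVec, ← vecMul_transpose, vecMul_vecMul, hO, vecMul_one]

def householder (u : n → ℝ) : Matrix n n ℝ := 1 - (2 / (u ⬝ᵥ u)) • vecMulVec u u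

theorem householder_transpose (u : n → ℝ) : (householder u)ᵀ = householder u := by
  simp [householder, transpose_vecMulVec]

theorem householder_mul_self (u : n → ℝ) : householder u * householder u = 1 := by
  rcases eq_or_ne (u ⬝ᵥ u) 0 with hu | hu
  · simp [householder, hu]
  · have : (2 / (u ⬝ᵥ u)) • vecMulVec u u * (2 / (u ⬝ᵥ u)) • vecMulVec u u
        = (2 * (2 / (u ⬝ᵥ u))) • vecMulVec u u := by
      rw [smul_mul_smul_comm, vecMulVec_mul_vecMulVec, vecMulVec_smul, smul_smul]
      congr 1
      field_simp
    rw [householder, sub_mul, mul_sub, mul_sub, this]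
    simp only [one_mul, mul_one, two_mul, add_smul]
    abel

theorem householder_mulVec {v w : n → ℝ} (h : v ⬝ᵥ v = w ⬝ᵥ w) :
    householder (v - w) *ᵥ v = w := by
  rcases eq_or_ne ((v - w) ⬝ᵥ (v - w)) 0 with hu | hu
  · rw [sub_eq_zero.mp (dotProduct_self_eq_zero.mp hu)]
    simp [householder]
  · have key : 2 / ((v - w) ⬝ᵥ (v - w)) * ((v - w) ⬝ᵥ v) = 1 := by
      rw [div_mul_eq_mul_div, div_eq_one_iff_eq hu]
      simp only [sub_dotProduct, dotProduct_sub, dotProduct_comm w v] at hu ⊢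
      linarith
    rw [householder, sub_mulVec, one_mulVec, smul_mulVec, vecMulVec_mulVec, op_smul_eq_smul,
      smul_smul, key, one_smul, sub_sub_cancel]

theorem exists_orthogonal_vecMul_eq {v w : n → ℝ} (h : v ⬝ᵥ v = w ⬝ᵥ w) :
    ∃ O : Matrix n n ℝ, Oᵀ * O = 1 ∧ v ᵥ* O = w :=
  ⟨householder (v - w), by rw [householder_transpose, householder_mul_self], by
    rw [← householder_transpose, vecMul_transpose, householder_mulVec h]⟩

end Orthogonal

theorem OrthoInvariant.integral_comp_mulVec {m : ℕ} {ν : Measure (Fin m → ℝ)}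
    (hν : OrthoInvariant ν) {O : Matrix (Fin m) (Fin m) ℝ} (hO : Oᵀ * O = 1)
    {g : (Fin m → ℝ) → ℝ} (hg : AEStronglyMeasurable g ν) :
    ∫ z, g (O *ᵥ z) ∂ν = ∫ z, g z ∂ν := by
  rw [← integral_map (by fun_prop) (by rwa [hν O hO]), hν O hO]

def OrthoInvariantFun {m : ℕ} (f : (Fin m → ℝ) → ℝ) : Prop :=
  ∀ O : Matrix (Fin m) (Fin m) ℝ, Oᵀ * O = 1 → ∀ z, f (O *ᵥ z) = f z

theorem orthoInvariantFun_comp_dotProduct_self {m : ℕ} (g : ℝ → ℝ) :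
    OrthoInvariantFun fun z : Fin m → ℝ => g (z ⬝ᵥ z) :=
  fun _ hO z => by simp only [mulVec_dotProduct_mulVec_self hO]

theorem OrthoInvariantFun.mul {m : ℕ} {s t : (Fin m → ℝ) → ℝ} (hs : OrthoInvariantFun s)
    (ht : OrthoInvariantFun t) : OrthoInvariantFun (s * t) :=
  fun O hO z => by simp only [Pi.mul_apply, hs O hO z, ht O hO z]

theorem memLp_comp_sqrt_dotProduct_self {m : ℕ} {ν : Measure (Fin m → ℝ)} [IsFiniteMeasure ν]
    {g : ℝ → ℝ} (hg : Continuous g) (hb : ∃ K, ∀ u, 0 ≤ u → |g u| ≤ K) (p : ENNReal) :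
    MemLp (fun z : Fin m → ℝ => g √(z ⬝ᵥ z)) p ν := by
  obtain ⟨K, hK⟩ := hb
  exact MemLp.of_bound (by fun_prop) K (ae_of_all _ fun z => hK _ (Real.sqrt_nonneg _))

theorem IsRhoFunction.memLp_comp_sqrt_dotProduct_self {m : ℕ} {ν : Measure (Fin m → ℝ)}
    [IsFiniteMeasure ν] {ρ : ℝ → ℝ} {c : ℝ} (hρ : IsRhoFunction ρ c) (p : ENNReal) :
    MemLp (fun z : Fin m → ℝ => ρ √(z ⬝ᵥ z)) p ν :=
  _root_.memLp_comp_sqrt_dotProduct_self hρ.continuous hρ.exists_abs_le p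

theorem IsRhoFunction.memLp_deriv_mul_comp_sqrt_dotProduct_self {m : ℕ}
    {ν : Measure (Fin m → ℝ)} [IsFiniteMeasure ν] {ρ : ℝ → ℝ} {c : ℝ} (hρ : IsRhoFunction ρ c)
    (p : ENNReal) : MemLp (fun z : Fin m → ℝ => deriv ρ √(z ⬝ᵥ z) * √(z ⬝ᵥ z)) p ν :=
  _root_.memLp_comp_sqrt_dotProduct_self (hρ.continuous_deriv.mul continuous_id)
    hρ.exists_abs_deriv_mul_le p

section Direction

variable {n : Type*} [Fintype n]

def dir (z : n → ℝ) : n → ℝ := (√(z ⬝ᵥ z))⁻¹ • z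

@[simp] theorem dir_zero : dir (0 : n → ℝ) = 0 := by simp [dir]

theorem dotProduct_dir (a z : n → ℝ) : a ⬝ᵥ dir z = (√(z ⬝ᵥ z))⁻¹ * (a ⬝ᵥ z) := by
  rw [dir, dotProduct_smul, smul_eq_mul]

theorem norm_dir_le_one (z : n → ℝ) : ‖dir z‖ ≤ 1 := by
  refine (pi_norm_le_iff_of_nonneg zero_le_one).2 fun i => ?_
  have hi : z i ^ 2 ≤ z ⬝ᵥ z :=
    (sq (z i)).symm ▸ Finset.single_le_sum (fun j _ => mul_self_nonneg (z j)) (Finset.mem_univ i)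
  rw [dir, Pi.smul_apply, smul_eq_mul, Real.norm_eq_abs, abs_mul, abs_inv,
    abs_of_nonneg (Real.sqrt_nonneg _), inv_mul_eq_div]
  exact div_le_one_of_le₀ (Real.abs_le_sqrt hi) (Real.sqrt_nonneg _)

theorem measurable_dir : Measurable (dir : (n → ℝ) → n → ℝ) := by
  unfold dir; fun_prop

theorem dir_dotProduct_dir {z : n → ℝ} (hz : z ≠ 0) : dir z ⬝ᵥ dir z = 1 := by
  have hpos : 0 < z ⬝ᵥ z :=
    (dotProduct_self_nonneg z).lt_of_ne (Ne.symm (dotProduct_self_eq_zero.not.2 hz))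
  rw [dotProduct_dir, dir, smul_dotProduct, smul_eq_mul, ← mul_assoc, ← mul_inv,
    Real.mul_self_sqrt hpos.le, inv_mul_cancel₀ hpos.ne']

theorem dir_mulVec [DecidableEq n] {O : Matrix n n ℝ} (hO : Oᵀ * O = 1) (z : n → ℝ) :
    dir (O *ᵥ z) = O *ᵥ dir z := by
  rw [dir, dir, mulVec_dotProduct_mulVec_self hO, mulVec_smul]

end Direction

section DirectionalMoments

variable {m : ℕ} {ν : Measure (Fin m → ℝ)} {f : (Fin m → ℝ) → ℝ}

def dirMoment2 (ν : Measure (Fin m → ℝ)) (f : (Fin m → ℝ) → ℝ) (a b : Fin m → ℝ) : ℝ :=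
  ∫ z, f z * ((a ⬝ᵥ dir z) * (b ⬝ᵥ dir z)) ∂ν

def dirMoment4 (ν : Measure (Fin m → ℝ)) (f : (Fin m → ℝ) → ℝ) (a b c d : Fin m → ℝ) : ℝ :=
  ∫ z, f z * ((a ⬝ᵥ dir z) * (b ⬝ᵥ dir z) * (c ⬝ᵥ dir z) * (d ⬝ᵥ dir z)) ∂ν

theorem integrable_mul_comp_dir (hf : Integrable f ν) {φ : (Fin m → ℝ) → ℝ}
    (hφ : Continuous φ) : Integrable (fun z => f z * φ (dir z)) ν := by
  obtain ⟨C, hC⟩ :=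
    (isCompact_closedBall (0 : Fin m → ℝ) 1).exists_bound_of_continuousOn hφ.continuousOn
  exact hf.mul_bdd (hφ.measurable.comp measurable_dir).aestronglyMeasurable
    (ae_of_all _ fun z => hC _ (mem_closedBall_zero_iff.2 (norm_dir_le_one z)))

theorem integrable_dirMoment2_integrand (hf : Integrable f ν) (a b : Fin m → ℝ) :
    Integrable (fun z => f z * ((a ⬝ᵥ dir z) * (b ⬝ᵥ dir z))) ν :=
  integrable_mul_comp_dir hf (φ := fun x => (a ⬝ᵥ x) * (b ⬝ᵥ x)) (by fun_prop)

theorem integrable_dirMoment4_integrand (hf : Integrable f ν) (a b c d : Fin m → ℝ) :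
    Integrable (fun z => f z * ((a ⬝ᵥ dir z) * (b ⬝ᵥ dir z) * (c ⬝ᵥ dir z) * (d ⬝ᵥ dir z))) ν :=
  integrable_mul_comp_dir hf
    (φ := fun x => (a ⬝ᵥ x) * (b ⬝ᵥ x) * (c ⬝ᵥ x) * (d ⬝ᵥ x)) (by fun_prop)

theorem dirMoment4_vecMul_self (hν : OrthoInvariant ν) (hf : OrthoInvariantFun f)
    (hfi : Integrable f ν) {O : Matrix (Fin m) (Fin m) ℝ} (hO : Oᵀ * O = 1) (v : Fin m → ℝ) :
    dirMoment4 ν f (v ᵥ* O) (v ᵥ* O) (v ᵥ* O) (v ᵥ* O) = dirMoment4 ν f v v v v := by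
  rw [dirMoment4, dirMoment4,
    ← hν.integral_comp_mulVec hO (integrable_dirMoment4_integrand hfi v v v v).aestronglyMeasurable]
  simp only [hf O hO, dir_mulVec hO, dotProduct_mulVec]

theorem dirMoment4_smul_self (t : ℝ) (v : Fin m → ℝ) :
    dirMoment4 ν f (t • v) (t • v) (t • v) (t • v) = t ^ 4 * dirMoment4 ν f v v v v := by
  rw [dirMoment4, dirMoment4, ← integral_const_mul]
  congr 1 with z
  simp only [smul_dotProduct, smul_eq_mul]
  ring

theorem dirMoment4_self_eq (hν : OrthoInvariant ν) (hf : OrthoInvariantFun f)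
    (hfi : Integrable f ν) {e : Fin m → ℝ} (he : e ⬝ᵥ e = 1) (v : Fin m → ℝ) :
    dirMoment4 ν f v v v v = (v ⬝ᵥ v) ^ 2 * dirMoment4 ν f e e e e := by
  set r := √(v ⬝ᵥ v)
  have hr : r ^ 2 = v ⬝ᵥ v := Real.sq_sqrt (dotProduct_self_nonneg v)
  obtain ⟨O, hO, hvO⟩ := exists_orthogonal_vecMul_eq (v := v) (w := r • e) (by
    rw [smul_dotProduct, dotProduct_smul, he, smul_eq_mul, smul_eq_mul, mul_one, ← sq, hr])
  rw [← dirMoment4_vecMul_self hν hf hfi hO, hvO, dirMoment4_smul_self, ← hr]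
  ring

theorem dirMoment4_polarization (hfi : Integrable f ν) (a b c d : Fin m → ℝ) :
    192 * dirMoment4 ν f a b c d =
      ∑ ε ∈ ({1, -1} : Finset ℝ) ×ˢ ({1, -1} : Finset ℝ) ×ˢ ({1, -1} : Finset ℝ),
        ε.1 * ε.2.1 * ε.2.2 * dirMoment4 ν f (a + ε.1 • b + ε.2.1 • c + ε.2.2 • d)
          (a + ε.1 • b + ε.2.1 • c + ε.2.2 • d) (a + ε.1 • b + ε.2.1 • c + ε.2.2 • d)
          (a + ε.1 • b + ε.2.1 • c + ε.2.2 • d) := by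
  simp only [dirMoment4, ← integral_const_mul]
  rw [← integral_finsetSum _ fun ε _ => (integrable_dirMoment4_integrand hfi _ _ _ _).const_mul _]
  congr 1 with z
  simp only [Finset.sum_product, Finset.sum_pair (show (1 : ℝ) ≠ -1 by norm_num), add_dotProduct,
    smul_dotProduct, smul_eq_mul]
  ring

theorem dirMoment4_eq_of_unit (hν : OrthoInvariant ν) (hf : OrthoInvariantFun f)
    (hfi : Integrable f ν) {e : Fin m → ℝ} (he : e ⬝ᵥ e = 1) (a b c d : Fin m → ℝ) :
    dirMoment4 ν f a b c d = dirMoment4 ν f e e e e / 3 *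
      ((a ⬝ᵥ b) * (c ⬝ᵥ d) + (a ⬝ᵥ c) * (b ⬝ᵥ d) + (a ⬝ᵥ d) * (b ⬝ᵥ c)) := by
  obtain ⟨L, hL⟩ : ∃ L, ∀ v, dirMoment4 ν f v v v v = (v ⬝ᵥ v) ^ 2 * L :=
    ⟨_, dirMoment4_self_eq hν hf hfi he⟩
  have h := dirMoment4_polarization hfi a b c d
  simp only [hL, Finset.sum_product, Finset.sum_pair (show (1 : ℝ) ≠ -1 by norm_num),
    add_dotProduct, dotProduct_add, smul_dotProduct, dotProduct_smul, smul_eq_mul] at h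
  rw [dotProduct_comm b a, dotProduct_comm c a, dotProduct_comm d a, dotProduct_comm c b,
    dotProduct_comm d b, dotProduct_comm d c] at h
  rw [hL, he]
  linear_combination h / 192

theorem sum_dirMoment4_single (hfi : Integrable f ν) (a b : Fin m → ℝ) :
    ∑ r, dirMoment4 ν f a b (Pi.single r 1) (Pi.single r 1) = dirMoment2 ν f a b := by
  simp only [dirMoment2, dirMoment4]
  rw [← integral_finsetSum _ fun r _ => integrable_dirMoment4_integrand hfi _ _ _ _]
  congr 1 with z
  simp only [single_one_dotProduct, ← Finset.mul_sum, mul_assoc]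
  rcases eq_or_ne z 0 with rfl | hz
  · simp
  · rw [← dotProduct, dir_dotProduct_dir hz, mul_one]

theorem sum_dirMoment2_single (hfi : Integrable f ν) (hf0 : f 0 = 0) :
    ∑ p, dirMoment2 ν f (Pi.single p 1) (Pi.single p 1) = ∫ z, f z ∂ν := by
  simp only [dirMoment2]
  rw [← integral_finsetSum _ fun p _ => integrable_dirMoment2_integrand hfi _ _]
  congr 1 with z
  simp only [single_one_dotProduct, ← Finset.mul_sum]
  rcases eq_or_ne z 0 with rfl | hz
  · simp [hf0]
  · rw [← dotProduct, dir_dotProduct_dir hz, mul_one]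

theorem dirMoment2_eq_of_unit (hν : OrthoInvariant ν) (hf : OrthoInvariantFun f)
    (hfi : Integrable f ν) {e : Fin m → ℝ} (he : e ⬝ᵥ e = 1) (a b : Fin m → ℝ) :
    dirMoment2 ν f a b = dirMoment4 ν f e e e e / 3 * (m + 2) * (a ⬝ᵥ b) := by
  rw [← sum_dirMoment4_single hfi,
    Finset.sum_congr rfl fun r _ => dirMoment4_eq_of_unit hν hf hfi he a b _ _]
  simp only [dotProduct_single_one, Pi.single_eq_same, mul_one, ← Finset.mul_sum,
    Finset.sum_add_distrib, Finset.sum_const, Finset.card_univ, Fintype.card_fin, nsmul_eq_mul]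
  rw [← dotProduct]
  ring

theorem dirMoment4_self_mul_eq_integral (hν : OrthoInvariant ν) (hf : OrthoInvariantFun f)
    (hfi : Integrable f ν) (hf0 : f 0 = 0) {e : Fin m → ℝ} (he : e ⬝ᵥ e = 1) :
    dirMoment4 ν f e e e e / 3 * (m + 2) * m = ∫ z, f z ∂ν := by
  rw [← sum_dirMoment2_single hfi hf0,
    Finset.sum_congr rfl fun p _ => dirMoment2_eq_of_unit hν hf hfi he _ _]
  simp only [single_one_dotProduct, Pi.single_eq_same, mul_one, Finset.sum_const,
    Finset.card_univ, Fintype.card_fin, nsmul_eq_mul]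
  ring

def centeredDir (a b z : Fin m → ℝ) : ℝ := (a ⬝ᵥ dir z) * (b ⬝ᵥ dir z) - (a ⬝ᵥ b) / m

theorem integrable_mul_centeredDir (hfi : Integrable f ν) (a b : Fin m → ℝ) :
    Integrable (fun z => f z * centeredDir a b z) ν :=
  integrable_mul_comp_dir hfi (φ := fun x => (a ⬝ᵥ x) * (b ⬝ᵥ x) - (a ⬝ᵥ b) / m) (by fun_prop)

theorem integrable_mul_centeredDir_mul_centeredDir (hfi : Integrable f ν) (a b c d : Fin m → ℝ) :
    Integrable (fun z => f z * (centeredDir a b z * centeredDir c d z)) ν :=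
  integrable_mul_comp_dir hfi (φ := fun x =>
    ((a ⬝ᵥ x) * (b ⬝ᵥ x) - (a ⬝ᵥ b) / m) * ((c ⬝ᵥ x) * (d ⬝ᵥ x) - (c ⬝ᵥ d) / m)) (by fun_prop)

variable [NeZero m]

theorem dirMoment4_eq (hν : OrthoInvariant ν) (hf : OrthoInvariantFun f) (hfi : Integrable f ν)
    (hf0 : f 0 = 0) (a b c d : Fin m → ℝ) :
    dirMoment4 ν f a b c d = (∫ z, f z ∂ν) / (m * (m + 2)) *
      ((a ⬝ᵥ b) * (c ⬝ᵥ d) + (a ⬝ᵥ c) * (b ⬝ᵥ d) + (a ⬝ᵥ d) * (b ⬝ᵥ c)) := by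
  have he : Pi.single (0 : Fin m) (1 : ℝ) ⬝ᵥ Pi.single 0 1 = 1 := by simp
  rw [dirMoment4_eq_of_unit hν hf hfi he, ← dirMoment4_self_mul_eq_integral hν hf hfi hf0 he]
  field_simp [NeZero.ne m]

theorem dirMoment2_eq (hν : OrthoInvariant ν) (hf : OrthoInvariantFun f) (hfi : Integrable f ν)
    (hf0 : f 0 = 0) (a b : Fin m → ℝ) :
    dirMoment2 ν f a b = (∫ z, f z ∂ν) / m * (a ⬝ᵥ b) := by
  have he : Pi.single (0 : Fin m) (1 : ℝ) ⬝ᵥ Pi.single 0 1 = 1 := by simp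
  rw [dirMoment2_eq_of_unit hν hf hfi he, ← dirMoment4_self_mul_eq_integral hν hf hfi hf0 he]
  field_simp [NeZero.ne m]

theorem integral_mul_centeredDir (hν : OrthoInvariant ν) (hf : OrthoInvariantFun f)
    (hfi : Integrable f ν) (hf0 : f 0 = 0) (a b : Fin m → ℝ) :
    ∫ z, f z * centeredDir a b z ∂ν = 0 := by
  simp only [centeredDir, mul_sub]
  rw [integral_sub (integrable_dirMoment2_integrand hfi a b) (hfi.mul_const _), integral_mul_const,
    ← dirMoment2, dirMoment2_eq hν hf hfi hf0]
  ring

theorem integral_mul_centeredDir_mul_centeredDir (hν : OrthoInvariant ν)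
    (hf : OrthoInvariantFun f) (hfi : Integrable f ν) (hf0 : f 0 = 0) (a b c d : Fin m → ℝ) :
    ∫ z, f z * (centeredDir a b z * centeredDir c d z) ∂ν = (∫ z, f z ∂ν) / (m * (m + 2)) *
      ((a ⬝ᵥ c) * (b ⬝ᵥ d) + (a ⬝ᵥ d) * (b ⬝ᵥ c) - 2 / m * (a ⬝ᵥ b) * (c ⬝ᵥ d)) := by
  have expand : ∀ z, f z * (centeredDir a b z * centeredDir c d z) =
      f z * ((a ⬝ᵥ dir z) * (b ⬝ᵥ dir z) * (c ⬝ᵥ dir z) * (d ⬝ᵥ dir z))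
        - (c ⬝ᵥ d) / m * (f z * ((a ⬝ᵥ dir z) * (b ⬝ᵥ dir z)))
        - (a ⬝ᵥ b) / m * (f z * centeredDir c d z) := by
    intro z; simp only [centeredDir]; ring
  simp only [expand]
  rw [integral_sub (by exact ((integrable_dirMoment4_integrand hfi a b c d).sub
      ((integrable_dirMoment2_integrand hfi a b).const_mul _)))
      ((integrable_mul_centeredDir hfi c d).const_mul _),
    integral_sub (integrable_dirMoment4_integrand hfi a b c d)
      ((integrable_dirMoment2_integrand hfi a b).const_mul _),
    integral_const_mul, integral_const_mul, integral_mul_centeredDir hν hf hfi hf0,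
    ← dirMoment4, ← dirMoment2, dirMoment4_eq hν hf hfi hf0, dirMoment2_eq hν hf hfi hf0]
  field_simp [NeZero.ne m]
  ring

theorem integral_influence_mul_influence (hν : OrthoInvariant ν) {s t : (Fin m → ℝ) → ℝ}
    (hs : OrthoInvariantFun s) (ht : OrthoInvariantFun t) (hs0 : s 0 = 0)
    (hs2 : MemLp s 2 ν) (ht2 : MemLp t 2 ν) (a b c d : Fin m → ℝ) :
    ∫ z, (s z * centeredDir a b z + t z * (a ⬝ᵥ b)) * (s z * centeredDir c d z + t z * (c ⬝ᵥ d)) ∂ν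
      = (∫ z, s z ^ 2 ∂ν) / (m * (m + 2)) *
          ((a ⬝ᵥ c) * (b ⬝ᵥ d) + (a ⬝ᵥ d) * (b ⬝ᵥ c) - 2 / m * (a ⬝ᵥ b) * (c ⬝ᵥ d))
        + (∫ z, t z ^ 2 ∂ν) * ((a ⬝ᵥ b) * (c ⬝ᵥ d)) := by
  have hss := hs2.integrable_mul hs2
  have hst := hs2.integrable_mul ht2
  have htt := ht2.integrable_mul ht2
  have expand : ∀ z, (s z * centeredDir a b z + t z * (a ⬝ᵥ b)) *
      (s z * centeredDir c d z + t z * (c ⬝ᵥ d)) =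
        (s * s) z * (centeredDir a b z * centeredDir c d z)
        + ((c ⬝ᵥ d) * ((s * t) z * centeredDir a b z)
        + ((a ⬝ᵥ b) * ((s * t) z * centeredDir c d z) + (a ⬝ᵥ b) * (c ⬝ᵥ d) * (t * t) z)) := by
    intro z; simp only [Pi.mul_apply]; ring
  have hst0 : (s * t) 0 = 0 := by simp [hs0]
  simp only [expand]
  rw [integral_add (integrable_mul_centeredDir_mul_centeredDir hss a b c d) (by
      exact ((integrable_mul_centeredDir hst a b).const_mul _).add
        (((integrable_mul_centeredDir hst c d).const_mul _).add (htt.const_mul _))),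
    integral_add ((integrable_mul_centeredDir hst a b).const_mul _)
      (by exact ((integrable_mul_centeredDir hst c d).const_mul _).add (htt.const_mul _)),
    integral_add ((integrable_mul_centeredDir hst c d).const_mul _) (htt.const_mul _),
    integral_const_mul, integral_const_mul, integral_const_mul,
    integral_mul_centeredDir_mul_centeredDir hν (hs.mul hs) hss (by simp [hs0]),
    integral_mul_centeredDir hν (hs.mul ht) hst hst0,
    integral_mul_centeredDir hν (hs.mul ht) hst hst0]
  simp only [Pi.mul_apply, ← sq]
  ring

end DirectionalMoments

section MatrixFacts

variable {m : ℕ} {A : Matrix (Fin m) (Fin m) ℝ}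

theorem isUnit_det_of_posDef_mul_transpose (h : (A * Aᵀ).PosDef) : IsUnit A.det :=
  isUnit_iff_ne_zero.2 fun h0 => h.det_pos.ne' (by rw [det_mul, h0, zero_mul])

theorem mnorm_mul_transpose_mulVec (hA : IsUnit A.det) (z : Fin m → ℝ) :
    mnorm (A * Aᵀ) (A *ᵥ z) = √(z ⬝ᵥ z) := by
  have hAT : IsUnit Aᵀ.det := by rwa [det_transpose]
  have key : Aᵀ * (A * Aᵀ)⁻¹ * A = 1 := by
    rw [Matrix.mul_inv_rev, ← Matrix.mul_assoc, mul_nonsing_inv _ hAT, Matrix.one_mul,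
      nonsing_inv_mul _ hA]
  rw [mnorm, mulVec_mulVec, dotProduct_mulVec, ← vecMul_transpose, vecMul_vecMul,
    ← Matrix.mul_assoc, key, vecMul_one]

def mulVecMeasurableEquiv (hA : IsUnit A.det) : (Fin m → ℝ) ≃ᵐ (Fin m → ℝ) where
  toFun := (A *ᵥ ·)
  invFun := (A⁻¹ *ᵥ ·)
  left_inv z := by
    change A⁻¹ *ᵥ (A *ᵥ z) = z
    rw [mulVec_mulVec, nonsing_inv_mul _ hA, one_mulVec]
  right_inv z := by
    change A *ᵥ (A⁻¹ *ᵥ z) = z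
    rw [mulVec_mulVec, mul_nonsing_inv _ hA, one_mulVec]
  measurable_toFun := by change Measurable (A *ᵥ ·); fun_prop
  measurable_invFun := by change Measurable (A⁻¹ *ᵥ ·); fun_prop

theorem integral_map_mulVec (hA : IsUnit A.det) (ν : Measure (Fin m → ℝ))
    (g : (Fin m → ℝ) → ℝ) : ∫ e, g e ∂(ν.map A.mulVec) = ∫ z, g (A *ᵥ z) ∂ν :=
  integral_map_equiv (mulVecMeasurableEquiv hA) g

theorem mul_kronecker_apply_of_mulVec_vecm {K : Matrix (Fin m × Fin m) (Fin m × Fin m) ℝ}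
    (hK : ∀ B : Matrix (Fin m) (Fin m) ℝ, K *ᵥ vecm B = vecm Bᵀ)
    (X Y : Matrix (Fin m) (Fin m) ℝ) (i j k l : Fin m) :
    (K * (X ⊗ₖ Y)) (i, j) (k, l) = X j k * Y i l := by
  change (K *ᵥ vecm (of fun a b => X a k * Y b l)) (i, j) = _
  rw [hK]
  rfl

end MatrixFacts

theorem asymptotic_variance_MM_scatter_general
    {m : ℕ}
    (ρ₀ ρ₁ : ℝ → ℝ) (c₀ c₁ : ℝ)
    (hρ₀ : IsRhoFunction ρ₀ c₀) (hρ₁ : IsRhoFunction ρ₁ c₁)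
    (δ₀ : ℝ)
    (Sig : Matrix (Fin m) (Fin m) ℝ) (hSig : Sig.PosDef)
    -- the elliptically symmetric error law F
    (ν : Measure (Fin m → ℝ)) [IsProbabilityMeasure ν] (hν : OrthoInvariant ν)
    (A : Matrix (Fin m) (Fin m) ℝ) (hA : A * Aᵀ = Sig)
    (F : Measure (Fin m → ℝ)) (hF : F = ν.map A.mulVec)
    (γ₀ : ℝ)
    (π₁ : ℝ)
    -- the influence-function matrix M(e); for e = 0 this formula gives (2/γ₀)(−δ₀)Σ
    (M : (Fin m → ℝ) → Matrix (Fin m) (Fin m) ℝ)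
    (hM : ∀ e, M e = (((m : ℝ) / π₁) * deriv ρ₁ (mnorm Sig e) * mnorm Sig e) •
        (((mnorm Sig e) ^ 2)⁻¹ • vecMulVec e e - ((m : ℝ))⁻¹ • Sig)
      + ((2 / γ₀) * (ρ₀ (mnorm Sig e) - δ₀)) • Sig)
    -- the commutation matrix K_m, determined by K_m vec(A) = vec(Aᵀ)
    (Km : Matrix (Fin m × Fin m) (Fin m × Fin m) ℝ)
    (hKm : ∀ B : Matrix (Fin m) (Fin m) ℝ, Km.mulVec (vecm B) = vecm Bᵀ)
    -- the constants σ₁ and σ₂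
    (σ₁ σ₂ : ℝ)
    (hσ₁ : σ₁ = ((m : ℝ) / (π₁ ^ 2 * ((m : ℝ) + 2))) *
      ∫ e, (deriv ρ₁ (mnorm Sig e)) ^ 2 * (mnorm Sig e) ^ 2 ∂F)
    (hσ₂ : σ₂ = (4 / γ₀ ^ 2) * (∫ e, (ρ₀ (mnorm Sig e) - δ₀) ^ 2 ∂F) - (2 / (m : ℝ)) * σ₁) :
    (Matrix.of fun q r : Fin m × Fin m => ∫ e, vecm (M e) q * vecm (M e) r ∂F) =
      σ₁ • ((1 + Km) * (Sig ⊗ₖ Sig)) + σ₂ • vecMulVec (vecm Sig) (vecm Sig) := by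
  subst hF hA
  have hA : IsUnit A.det := isUnit_det_of_posDef_mul_transpose hSig
  set s : (Fin m → ℝ) → ℝ := fun z => m / π₁ * (deriv ρ₁ √(z ⬝ᵥ z) * √(z ⬝ᵥ z))
  set t : (Fin m → ℝ) → ℝ := fun z => 2 / γ₀ * (ρ₀ √(z ⬝ᵥ z) - δ₀)
  have hMA : ∀ z a b, M (A *ᵥ z) a b = s z * centeredDir (A a) (A b) z + t z * (A a ⬝ᵥ A b) := by
    intro z a b
    simp only [hM, mnorm_mul_transpose_mulVec hA, Matrix.add_apply, Matrix.smul_apply,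
      Matrix.sub_apply, vecMulVec_apply, smul_eq_mul, centeredDir, dotProduct_dir, s, t]
    change _ * (_ * ((A a ⬝ᵥ z) * (A b ⬝ᵥ z)) - _ * (A a ⬝ᵥ A b)) + _ * (A a ⬝ᵥ A b) = _
    ring
  have hs : ∫ z, s z ^ 2 ∂ν = σ₁ * (m * (m + 2)) := by
    simp only [hσ₁, integral_map_mulVec hA, mnorm_mul_transpose_mulVec hA, s, mul_pow,
      integral_const_mul]
    field_simp
  have ht : ∫ z, t z ^ 2 ∂ν = σ₂ + 2 / m * σ₁ := by
    simp only [hσ₂, integral_map_mulVec hA, mnorm_mul_transpose_mulVec hA, t, mul_pow,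
      integral_const_mul, div_pow]
    ring
  ext ⟨i, j⟩ ⟨k, l⟩
  have : NeZero m := ⟨i.pos.ne'⟩
  rw [of_apply, integral_map_mulVec hA]
  simp only [vecm, hMA]
  rw [integral_influence_mul_influence hν (orthoInvariantFun_comp_dotProduct_self
      (fun x => m / π₁ * (deriv ρ₁ √x * √x))) (orthoInvariantFun_comp_dotProduct_self
      (fun x => 2 / γ₀ * (ρ₀ √x - δ₀))) (by simp)
      ((hρ₁.memLp_deriv_mul_comp_sqrt_dotProduct_self 2).const_mul _)
      (((hρ₀.memLp_comp_sqrt_dotProduct_self 2).sub (memLp_const δ₀)).const_mul _), hs, ht]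
  simp only [Matrix.add_apply, Matrix.smul_apply, smul_eq_mul, Matrix.add_mul, one_mul,
    kroneckerMap_apply, mul_kronecker_apply_of_mulVec_vecm hKm, vecMulVec_apply, vecm,
    show ∀ a b, (A * Aᵀ) a b = A a ⬝ᵥ A b from fun _ _ => rfl]
  field_simp [NeZero.ne m]
  ring

/-- **Asymptotic variance of the MM scatter estimator in the SUR model**
(Theorem 2, scatter part):
`E[vec(M(E)) vec(M(E))ᵀ] = σ₁ (I + K_m)(Σ ⊗ Σ) + σ₂ vec(Σ) vec(Σ)ᵀ`. -/
theorem asymptotic_variance_MM_scatter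
    {m : ℕ} (hm : 1 < m)
    (ρ₀ ρ₁ : ℝ → ℝ) (c₀ c₁ : ℝ)
    (hρ₀ : IsRhoFunction ρ₀ c₀) (hρ₁ : IsRhoFunction ρ₁ c₁)
    (δ₀ : ℝ) (hδ : 0 < δ₀ ∧ δ₀ < ρ₀ c₀)
    (Sig : Matrix (Fin m) (Fin m) ℝ) (hSig : Sig.PosDef)
    -- the elliptically symmetric error law F
    (ν : Measure (Fin m → ℝ)) [IsProbabilityMeasure ν] (hν : OrthoInvariant ν)
    (A : Matrix (Fin m) (Fin m) ℝ) (hA : A * Aᵀ = Sig)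
    (F : Measure (Fin m → ℝ)) (hF : F = ν.map A.mulVec)
    -- γ₀ ≠ 0 and π₁ ≠ 0
    (γ₀ : ℝ) (hγ : γ₀ = ∫ e, deriv ρ₀ (mnorm Sig e) * mnorm Sig e ∂F) (hγ0 : γ₀ ≠ 0)
    (π₁ : ℝ)
    (hπ : π₁ = (1 / ((m : ℝ) + 2)) * ∫ e, (((m : ℝ) + 1) * deriv ρ₁ (mnorm Sig e) * mnorm Sig e
        + deriv (deriv ρ₁) (mnorm Sig e) * mnorm Sig e ^ 2) ∂F)
    (hπ0 : π₁ ≠ 0)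
    -- the influence-function matrix M(e); for e = 0 this formula gives (2/γ₀)(−δ₀)Σ
    (M : (Fin m → ℝ) → Matrix (Fin m) (Fin m) ℝ)
    (hM : ∀ e, M e = (((m : ℝ) / π₁) * deriv ρ₁ (mnorm Sig e) * mnorm Sig e) •
        (((mnorm Sig e) ^ 2)⁻¹ • vecMulVec e e - ((m : ℝ))⁻¹ • Sig)
      + ((2 / γ₀) * (ρ₀ (mnorm Sig e) - δ₀)) • Sig)
    -- the commutation matrix K_m, determined by K_m vec(A) = vec(Aᵀ)
    (Km : Matrix (Fin m × Fin m) (Fin m × Fin m) ℝ)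
    (hKm : ∀ B : Matrix (Fin m) (Fin m) ℝ, Km.mulVec (vecm B) = vecm Bᵀ)
    -- the constants σ₁ and σ₂
    (σ₁ σ₂ : ℝ)
    (hσ₁ : σ₁ = ((m : ℝ) / (π₁ ^ 2 * ((m : ℝ) + 2))) *
      ∫ e, (deriv ρ₁ (mnorm Sig e)) ^ 2 * (mnorm Sig e) ^ 2 ∂F)
    (hσ₂ : σ₂ = (4 / γ₀ ^ 2) * (∫ e, (ρ₀ (mnorm Sig e) - δ₀) ^ 2 ∂F) - (2 / (m : ℝ)) * σ₁) :
    (Matrix.of fun q r : Fin m × Fin m => ∫ e, vecm (M e) q * vecm (M e) r ∂F) =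
      σ₁ • ((1 + Km) * (Sig ⊗ₖ Sig)) + σ₂ • vecMulVec (vecm Sig) (vecm Sig) :=
  asymptotic_variance_MM_scatter_general ρ₀ ρ₁ c₀ c₁ hρ₀ hρ₁ δ₀ Sig hSig ν hν A hA F hF γ₀ π₁ M hM
    Km hKm σ₁ σ₂ hσ₁ hσ₂
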